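/- arXiv:math/0505185 — 3 statements merged into one kernel-verified Lean document; each statement's English description precedes it below -/
import Mathlib

section
/- Let H be an n×n Hermitian matrix, ξ ∈ ℂⁿ a column vector, λ ∈ ℝ, and α ∈ ℂ with α ≠ 0. Let H' be the (n+2)×(n+2) Hermitian matrix in block form with blocks [[H, ξ, 0], [ξ*, λ, α], [0, ᾱ, 0]]. Then sign(H') = sign(H) and null(H') = null(H). -/
open scoped Classical
open scoped Matrix

/-- The signature of a Hermitian complex matrix: number of positive eigenvalues
minus number of negative eigenvalues (with multiplicity). -/
noncomputable def hermSign {m : Type} [Fintype m] [DecidableEq m]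
    (H : Matrix m m ℂ) : ℤ :=
  if h : H.IsHermitian then
    ((Finset.univ.filter fun i => 0 < h.eigenvalues i).card : ℤ) -
      ((Finset.univ.filter fun i => h.eigenvalues i < 0).card : ℤ)
  else 0

/-- The nullity of a Hermitian complex matrix: number of zero eigenvalues
(with multiplicity), equivalently the dimension of the kernel. -/
noncomputable def hermNull {m : Type} [Fintype m] [DecidableEq m]
    (H : Matrix m m ℂ) : ℕ :=
  if h : H.IsHermitian then
    (Finset.univ.filter fun i => h.eigenvalues i = 0).card
  else 0

/-!
Signature and nullity can be read off from any congruence diagonalization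
`A = Pᴴ * diagonal w * P` with `P` invertible (Sylvester's law of inertia): the number of positive
entries of `w` is the maximal dimension of a subspace on which `x ↦ xᴴ A x` is positive definite.
Writing `x = (u, s, t)`, the form of `H'` is `uᴴ H u + 2 Re (s̄ b)` with `b = ξᴴ u + λ s / 2 + α t`,
and `2 Re (s̄ b) = |s + b/2|² - |s - b/2|²`. Since `α ≠ 0`, the substitution
`(u, s, t) ↦ (u, s + b/2, s - b/2)` is invertible, so a diagonalization of `H` extends to one of
`H'` with two extra entries `1` and `-1`.
-/

open Matrix Finset Module

theorem LinearMap.finrank_le_card_add_finrank_ker {K V ι : Type*} [Field K] [AddCommGroup V]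
    [Module K V] [FiniteDimensional K V] [Fintype ι] (f : V →ₗ[K] ι → K) :
    finrank K V ≤ Fintype.card ι + finrank K (ker f) := by
  rw [← f.finrank_range_add_finrank_ker, ← finrank_fintype_fun_eq_card K]
  exact Nat.add_le_add_right (Submodule.finrank_le _) _

theorem Finset.card_filter_sumElim {k l α : Type*} [Fintype k] [Fintype l] (p : α → Prop)
    [DecidablePred p] (a : k → α) (b : l → α) :
    #{i | p (Sum.elim a b i)} = #{i | p (a i)} + #{i | p (b i)} := by
  simp only [card_filter, Fintype.sum_sum_type, Sum.elim_inl, Sum.elim_inr]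
  rfl

theorem Finset.card_filter_pos_add_card_filter_neg_add_card_filter_eq_zero {k : Type*}
    [Fintype k] (w : k → ℝ) :
    #{i | 0 < w i} + #{i | w i < 0} + #{i | w i = 0} = Fintype.card k := by
  simp only [card_filter, ← sum_add_distrib, Fintype.card_eq_sum_ones]
  refine sum_congr rfl fun i _ => ?_
  rcases lt_trichotomy (w i) 0 with h | h | h
  · simp [h, h.ne, h.not_gt]
  · simp [h]
  · simp [h, h.ne', h.not_gt]

namespace Matrix

variable {m : Type*} [Fintype m] [DecidableEq m]

theorem star_dotProduct_conjTranspose_mul_diagonal_mul_mulVec (P : Matrix m m ℂ) (w : m → ℝ)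
    (x : m → ℂ) :
    star x ⬝ᵥ (Pᴴ * diagonal (fun i => (w i : ℂ)) * P) *ᵥ x =
      ((∑ i, w i * Complex.normSq ((P *ᵥ x) i) : ℝ) : ℂ) := by
  rw [← mulVec_mulVec, ← mulVec_mulVec, dotProduct_mulVec, ← star_mulVec, dotProduct]
  push_cast
  refine sum_congr rfl fun i _ => ?_
  rw [mulVec_diagonal, Complex.normSq_eq_conj_mul_self]
  simp only [Pi.star_apply, RCLike.star_def]
  ring

/-- The form of `A` is `≥ 0` on such `x` by the first diagonalization and `≤ 0` by the second,
so it vanishes, which forces the remaining coordinates of `P *ᵥ x` to vanish as well. -/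
theorem mulVec_eq_zero_of_eq_conjTranspose_mul_diagonal_mul {A P Q : Matrix m m ℂ} {w v : m → ℝ}
    (hw : A = Pᴴ * diagonal (fun i => (w i : ℂ)) * P)
    (hv : A = Qᴴ * diagonal (fun i => (v i : ℂ)) * Q) {x : m → ℂ}
    (hPx : ∀ i, w i ≤ 0 → (P *ᵥ x) i = 0) (hQx : ∀ i, 0 < v i → (Q *ᵥ x) i = 0) :
    P *ᵥ x = 0 := by
  have hsum :
      ∑ i, w i * Complex.normSq ((P *ᵥ x) i) = ∑ i, v i * Complex.normSq ((Q *ᵥ x) i) := by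
    apply Complex.ofReal_injective
    rw [← star_dotProduct_conjTranspose_mul_diagonal_mul_mulVec,
      ← star_dotProduct_conjTranspose_mul_diagonal_mul_mulVec, ← hw, ← hv]
  have hterm i : 0 ≤ w i * Complex.normSq ((P *ᵥ x) i) := by
    rcases le_or_gt (w i) 0 with hi | hi
    · simp [hPx i hi]
    · exact mul_nonneg hi.le (Complex.normSq_nonneg _)
  have hnonpos : ∑ i, v i * Complex.normSq ((Q *ᵥ x) i) ≤ 0 := by
    refine sum_nonpos fun i _ => ?_
    rcases le_or_gt (v i) 0 with hi | hi
    · exact mul_nonpos_of_nonpos_of_nonneg hi (Complex.normSq_nonneg _)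
    · simp [hQx i hi]
  have hzero := (sum_eq_zero_iff_of_nonneg fun i _ => hterm i).mp
    (le_antisymm (hsum ▸ hnonpos) (sum_nonneg fun i _ => hterm i))
  funext i
  rcases le_or_gt (w i) 0 with hi | hi
  · exact hPx i hi
  · simpa [hi.ne'] using hzero i (mem_univ i)

/-- Sylvester's law of inertia, one inequality: the kernels of `x ↦ ((P *ᵥ x) i)_{w i ≤ 0}` and
`x ↦ ((Q *ᵥ x) i)_{0 < v i}` meet only in `0`. -/
theorem card_pos_le_of_eq_conjTranspose_mul_diagonal_mul {A P Q : Matrix m m ℂ} {w v : m → ℝ}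
    (hP : IsUnit P) (hw : A = Pᴴ * diagonal (fun i => (w i : ℂ)) * P)
    (hv : A = Qᴴ * diagonal (fun i => (v i : ℂ)) * Q) :
    #{i | 0 < w i} ≤ #{i | 0 < v i} := by
  set f := LinearMap.funLeft ℂ ℂ (Subtype.val : {i // w i ≤ 0} → m) ∘ₗ P.mulVecLin
  set g := LinearMap.funLeft ℂ ℂ (Subtype.val : {i // 0 < v i} → m) ∘ₗ Q.mulVecLin
  have hdisj : Disjoint (LinearMap.ker f) (LinearMap.ker g) := by
    refine Submodule.disjoint_def.mpr fun x hf hg => mulVec_injective_iff_isUnit.mpr hP ?_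
    rw [mulVec_zero]
    exact mulVec_eq_zero_of_eq_conjTranspose_mul_diagonal_mul hw hv
      (fun i hi => congrFun (LinearMap.mem_ker.mp hf) ⟨i, hi⟩)
      (fun i hi => congrFun (LinearMap.mem_ker.mp hg) ⟨i, hi⟩)
  have := Submodule.finrank_add_finrank_le_of_disjoint hdisj
  have := f.finrank_le_card_add_finrank_ker
  have := g.finrank_le_card_add_finrank_ker
  have := card_filter_add_card_filter_not (s := univ) (fun i => 0 < w i)
  simp only [finrank_fintype_fun_eq_card, Fintype.card_subtype, not_lt, card_univ] at *
  omega

variable {A P Q : Matrix m m ℂ} {w v : m → ℝ}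

theorem card_pos_eq_of_eq_conjTranspose_mul_diagonal_mul (hP : IsUnit P) (hQ : IsUnit Q)
    (hw : A = Pᴴ * diagonal (fun i => (w i : ℂ)) * P)
    (hv : A = Qᴴ * diagonal (fun i => (v i : ℂ)) * Q) :
    #{i | 0 < w i} = #{i | 0 < v i} :=
  (card_pos_le_of_eq_conjTranspose_mul_diagonal_mul hP hw hv).antisymm
    (card_pos_le_of_eq_conjTranspose_mul_diagonal_mul hQ hv hw)

theorem neg_eq_conjTranspose_mul_diagonal_neg_mul
    (hw : A = Pᴴ * diagonal (fun i => (w i : ℂ)) * P) :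
    -A = Pᴴ * diagonal (fun i => ((-w i : ℝ) : ℂ)) * P := by
  rw [hw]
  push_cast
  rw [← diagonal_neg, Matrix.mul_neg, Matrix.neg_mul]

theorem card_neg_eq_of_eq_conjTranspose_mul_diagonal_mul (hP : IsUnit P) (hQ : IsUnit Q)
    (hw : A = Pᴴ * diagonal (fun i => (w i : ℂ)) * P)
    (hv : A = Qᴴ * diagonal (fun i => (v i : ℂ)) * Q) :
    #{i | w i < 0} = #{i | v i < 0} := by
  simpa only [Left.neg_pos_iff] using card_pos_eq_of_eq_conjTranspose_mul_diagonal_mul hP hQ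
    (neg_eq_conjTranspose_mul_diagonal_neg_mul hw) (neg_eq_conjTranspose_mul_diagonal_neg_mul hv)

theorem card_zero_eq_of_eq_conjTranspose_mul_diagonal_mul (hP : IsUnit P) (hQ : IsUnit Q)
    (hw : A = Pᴴ * diagonal (fun i => (w i : ℂ)) * P)
    (hv : A = Qᴴ * diagonal (fun i => (v i : ℂ)) * Q) :
    #{i | w i = 0} = #{i | v i = 0} := by
  have := card_pos_eq_of_eq_conjTranspose_mul_diagonal_mul hP hQ hw hv
  have := card_neg_eq_of_eq_conjTranspose_mul_diagonal_mul hP hQ hw hv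
  have := card_filter_pos_add_card_filter_neg_add_card_filter_eq_zero w
  have := card_filter_pos_add_card_filter_neg_add_card_filter_eq_zero v
  omega

theorem isHermitian_conjTranspose_mul_diagonal_mul (P : Matrix m m ℂ) (w : m → ℝ) :
    (Pᴴ * diagonal (fun i => (w i : ℂ)) * P).IsHermitian :=
  isHermitian_conjTranspose_mul_mul P (isHermitian_diagonal_iff.mpr fun _ => Complex.conj_ofReal _)

theorem IsHermitian.exists_eq_conjTranspose_mul_diagonal_eigenvalues_mul (hA : A.IsHermitian) :
    ∃ P : Matrix m m ℂ, IsUnit P ∧ A = Pᴴ * diagonal (fun i => (hA.eigenvalues i : ℂ)) * P := by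
  refine ⟨star (hA.eigenvectorUnitary : Matrix m m ℂ),
    Unitary.isUnit_coe (U := star hA.eigenvectorUnitary), ?_⟩
  conv_lhs => rw [hA.spectral_theorem, Unitary.conjStarAlgAut_apply]
  rw [star_eq_conjTranspose, conjTranspose_conjTranspose]
  rfl

section Enlargement

variable {n : ℕ}

noncomputable def elementaryEnlargement (H : Matrix (Fin n) (Fin n) ℂ) (ξ : Fin n → ℂ) (lam : ℝ)
    (α : ℂ) : Matrix (Fin n ⊕ Fin 2) (Fin n ⊕ Fin 2) ℂ :=
  let B : Matrix (Fin n) (Fin 2) ℂ := of fun i j => if j = 0 then ξ i else 0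
  fromBlocks H B Bᴴ !![(lam : ℂ), α; starRingEnd ℂ α, 0]

noncomputable def enlargementLeft (ξ : Fin n → ℂ) : Matrix (Fin 2) (Fin n) ℂ :=
  of ![fun j => star (ξ j) / 2, fun j => -star (ξ j) / 2]

noncomputable def enlargementCorner (lam : ℝ) (α : ℂ) : Matrix (Fin 2) (Fin 2) ℂ :=
  !![1 + lam / 4, α / 2; 1 - lam / 4, -α / 2]

theorem isUnit_fromBlocks_enlargement {P : Matrix (Fin n) (Fin n) ℂ} (hP : IsUnit P)
    (ξ : Fin n → ℂ) (lam : ℝ) {α : ℂ} (hα : α ≠ 0) :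
    IsUnit (fromBlocks P 0 (enlargementLeft ξ) (enlargementCorner lam α)) := by
  have hdet : (enlargementCorner lam α).det = -α := by
    rw [enlargementCorner, det_fin_two_of]
    ring
  rw [isUnit_iff_isUnit_det, det_fromBlocks_zero₁₂, hdet]
  exact ((isUnit_iff_isUnit_det P).mp hP).mul (neg_ne_zero.mpr hα).isUnit

/-- The rows of `enlargementLeft ξ` and `enlargementCorner lam α` are the coefficients of
`s ± b / 2`, where `b = ξᴴ u + lam s / 2 + α t`, in the coordinates `x = (u, s, t)`. -/
theorem elementaryEnlargement_eq {H P : Matrix (Fin n) (Fin n) ℂ} {w : Fin n → ℝ}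
    (hw : H = Pᴴ * diagonal (fun i => (w i : ℂ)) * P) (ξ : Fin n → ℂ) (lam : ℝ) (α : ℂ) :
    elementaryEnlargement H ξ lam α =
      (fromBlocks P 0 (enlargementLeft ξ) (enlargementCorner lam α))ᴴ *
        diagonal (fun i => ((Sum.elim w ![1, -1] i : ℝ) : ℂ)) *
        fromBlocks P 0 (enlargementLeft ξ) (enlargementCorner lam α) := by
  have hd : (fun i => ((Sum.elim w ![1, -1] i : ℝ) : ℂ)) =
      Sum.elim (fun i => (w i : ℂ)) ![1, -1] := by
    funext i
    rcases i with i | i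
    · rfl
    · fin_cases i <;> simp
  subst hw
  rw [elementaryEnlargement, hd, ← fromBlocks_diagonal, fromBlocks_conjTranspose,
    fromBlocks_multiply, fromBlocks_multiply]
  simp only [conjTranspose_zero, Matrix.zero_mul, Matrix.mul_zero, add_zero, zero_add]
  rw [fromBlocks_inj]
  refine ⟨?_, ?_, ?_, ?_⟩
  all_goals ext i j
  all_goals try fin_cases i
  all_goals try fin_cases j
  all_goals
    simp [mul_apply, Fin.sum_univ_two, enlargementLeft, enlargementCorner, map_ofNat]
    ring

end Enlargement

end Matrix

section Inertia

variable {m : Type} [Fintype m] [DecidableEq m] {A P : Matrix m m ℂ} {w : m → ℝ}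

theorem hermSign_eq_of_eq_conjTranspose_mul_diagonal_mul (hP : IsUnit P)
    (hw : A = Pᴴ * diagonal (fun i => (w i : ℂ)) * P) :
    hermSign A = (#{i | 0 < w i} : ℤ) - #{i | w i < 0} := by
  have hA : A.IsHermitian := hw ▸ isHermitian_conjTranspose_mul_diagonal_mul P w
  obtain ⟨U, hU, hAU⟩ := hA.exists_eq_conjTranspose_mul_diagonal_eigenvalues_mul
  rw [hermSign, dif_pos hA, card_pos_eq_of_eq_conjTranspose_mul_diagonal_mul hU hP hAU hw,
    card_neg_eq_of_eq_conjTranspose_mul_diagonal_mul hU hP hAU hw]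

theorem hermNull_eq_of_eq_conjTranspose_mul_diagonal_mul (hP : IsUnit P)
    (hw : A = Pᴴ * diagonal (fun i => (w i : ℂ)) * P) :
    hermNull A = #{i | w i = 0} := by
  have hA : A.IsHermitian := hw ▸ isHermitian_conjTranspose_mul_diagonal_mul P w
  obtain ⟨U, hU, hAU⟩ := hA.exists_eq_conjTranspose_mul_diagonal_eigenvalues_mul
  rw [hermNull, dif_pos hA, card_zero_eq_of_eq_conjTranspose_mul_diagonal_mul hU hP hAU hw]

end Inertia

/-- Elementary enlargement preserves signature and nullity. -/
theorem stmt2 (n : ℕ) (H : Matrix (Fin n) (Fin n) ℂ) (hH : H.IsHermitian)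
    (ξ : Fin n → ℂ) (lam : ℝ) (α : ℂ) (hα : α ≠ 0)
    (B : Matrix (Fin n) (Fin 2) ℂ) (hB : B = fun i j => if j = 0 then ξ i else 0)
    (D : Matrix (Fin 2) (Fin 2) ℂ) (hD : D = !![(lam : ℂ), α; starRingEnd ℂ α, 0]) :
    hermSign (Matrix.fromBlocks H B Bᴴ D) = hermSign H ∧
      hermNull (Matrix.fromBlocks H B Bᴴ D) = hermNull H := by
  obtain ⟨P, hP, hHP⟩ := hH.exists_eq_conjTranspose_mul_diagonal_eigenvalues_mul
  have hM : fromBlocks H B Bᴴ D = elementaryEnlargement H ξ lam α := by subst hB hD; rfl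
  have hPM := isUnit_fromBlocks_enlargement hP ξ lam hα
  have hHPM := elementaryEnlargement_eq hHP ξ lam α
  have hpos : #{i | 0 < (![1, -1] : Fin 2 → ℝ) i} = 1 := by
    rw [card_filter, Fin.sum_univ_two]; norm_num
  have hneg : #{i | (![1, -1] : Fin 2 → ℝ) i < 0} = 1 := by
    rw [card_filter, Fin.sum_univ_two]; norm_num
  have hzero : #{i | (![1, -1] : Fin 2 → ℝ) i = 0} = 0 := by
    rw [card_filter, Fin.sum_univ_two]; norm_num
  rw [hM, hermSign_eq_of_eq_conjTranspose_mul_diagonal_mul hPM hHPM,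
    hermSign_eq_of_eq_conjTranspose_mul_diagonal_mul hP hHP,
    hermNull_eq_of_eq_conjTranspose_mul_diagonal_mul hPM hHPM,
    hermNull_eq_of_eq_conjTranspose_mul_diagonal_mul hP hHP,
    card_filter_sumElim (0 < ·), card_filter_sumElim (· < (0 : ℝ)),
    card_filter_sumElim (· = (0 : ℝ)), hpos, hneg, hzero]
  constructor <;> push_cast <;> ring
end

section
/- Let V, V' be finite-dimensional complex vector spaces with Hermitian forms φ, φ'. Suppose V' = V ⊕ ℂ·e for a vector e with φ'|_{V×V} = φ (i.e., φ is obtained from φ' by restriction to a codimension-1 subspace). Then |sign(φ') − sign(φ)| + |null(φ') − null(φ)| = 1. -/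
/-!
Let `p(q)` be the positive index of a Hermitian form `q`, the largest dimension of a subspace on
which `q` is positive definite; for a Hermitian matrix it is the number of positive eigenvalues
(diagonalise and intersect with the span of the non-positive eigenvectors). Restricting `q` to a
hyperplane `U` can only lower `p`, and by at most one, since a positive definite subspace `W`
meets `U` in dimension at least `dim W - 1`. Applied to `q` and `-q`, the numbers of positive and
of negative eigenvalues each drop by `0` or `1` while the dimension drops by exactly `1`; the four
cases give a change `(0, 1)`, `(±1, 0)` or `(0, -1)` in (signature, nullity).
-/

open scoped Classical

open Matrix Module Function Finset

section PositiveIndex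

variable (K : Type*) {V V' : Type*} [Field K] [AddCommGroup V] [Module K V]
  [AddCommGroup V'] [Module K V']

/-- The positive index of inertia of `q` is the greatest element of this set. -/
def posDefDims (q : V → ℝ) : Set ℕ :=
  {k | ∃ W : Submodule K V, (∀ x ∈ W, x ≠ 0 → 0 < q x) ∧ finrank K W = k}

variable {K}

lemma posDefDims_comp_subset {f : V →ₗ[K] V'} (hf : Injective f) (q : V' → ℝ) :
    posDefDims K (q ∘ f) ⊆ posDefDims K q := by
  rintro _ ⟨W, hW, rfl⟩
  refine ⟨W.map f, ?_, (Submodule.equivMapOfInjective f hf W).finrank_eq.symm⟩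
  rintro _ ⟨x, hx, rfl⟩ hfx
  exact hW x hx (by rintro rfl; simp at hfx)

lemma posDefDims_comp_linearEquiv (e : V ≃ₗ[K] V') (q : V' → ℝ) :
    posDefDims K (q ∘ e) = posDefDims K q := by
  refine (posDefDims_comp_subset (f := (e : V →ₗ[K] V')) e.injective q).antisymm ?_
  simpa [comp_def] using
    posDefDims_comp_subset (f := (e.symm : V' →ₗ[K] V)) e.symm.injective (q ∘ e)

lemma exists_mem_posDefDims_comp_le_add_one [FiniteDimensional K V'] {f : V →ₗ[K] V'}
    (hf : Injective f) (hcodim : finrank K V' ≤ finrank K V + 1) {q : V' → ℝ} {k : ℕ}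
    (hk : k ∈ posDefDims K q) : ∃ j ∈ posDefDims K (q ∘ f), k ≤ j + 1 := by
  obtain ⟨W', hW', rfl⟩ := hk
  have : FiniteDimensional K V := .of_injective f hf
  refine ⟨finrank K (W'.comap f), ⟨W'.comap f, fun x hx hx0 => hW' _ hx (by simpa using hf.ne hx0),
    rfl⟩, ?_⟩
  have hmap : finrank K (W'.comap f) = finrank K (LinearMap.range f ⊓ W' : Submodule K V') := by
    rw [← Submodule.map_comap_eq, (Submodule.equivMapOfInjective f hf _).finrank_eq]
  have hsup := Submodule.finrank_sup_add_finrank_inf_eq (LinearMap.range f) W'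
  have hle := Submodule.finrank_le (LinearMap.range f ⊔ W')
  rw [LinearMap.finrank_range_of_inj hf] at hsup
  omega

theorem le_and_le_add_one_of_isGreatest_posDefDims [FiniteDimensional K V'] {f : V →ₗ[K] V'}
    (hf : Injective f) (hcodim : finrank K V' ≤ finrank K V + 1) {q : V' → ℝ} {a b : ℕ}
    (ha : IsGreatest (posDefDims K (q ∘ f)) a) (hb : IsGreatest (posDefDims K q) b) :
    a ≤ b ∧ b ≤ a + 1 := by
  obtain ⟨j, hj, hbj⟩ := exists_mem_posDefDims_comp_le_add_one hf hcodim hb.1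
  exact ⟨hb.2 (posDefDims_comp_subset hf q ha.1), hbj.trans (by simpa using ha.2 hj)⟩

end PositiveIndex

section Diagonal

variable {K m : Type*} [Field K] [Fintype m]

lemma finrank_iInf_ker_proj (p : m → Prop) [DecidablePred p] :
    finrank K (⨅ i ∈ {i | ¬ p i}, LinearMap.ker (LinearMap.proj i : (m → K) →ₗ[K] K) :
      Submodule K (m → K)) = #{i | p i} := by
  rw [(LinearMap.iInfKerProjEquiv K (fun _ => K) (I := {i | p i}) (J := {i | ¬ p i})
    (Set.disjoint_left.2 fun _ h h' => h' h) (fun i _ => em (p i))).finrank_eq,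
    finrank_fintype_fun_eq_card]
  simp [Fintype.card_subtype]

theorem isGreatest_posDefDims_sum_mul_normSq (d : m → ℝ) :
    IsGreatest (posDefDims ℂ fun x : m → ℂ => ∑ i, d i * Complex.normSq (x i)) #{i | 0 < d i} := by
  constructor
  · refine ⟨_, fun x hx hx0 => ?_, finrank_iInf_ker_proj (0 < d ·)⟩
    simp only [Submodule.mem_iInf, Set.mem_ofPred_eq, LinearMap.mem_ker, LinearMap.proj_apply] at hx
    obtain ⟨j, hj⟩ := Function.ne_iff.mp hx0
    have hdj : 0 < d j := by by_contra h; exact hj (hx j h)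
    refine sum_pos' (fun i _ => ?_) ⟨j, mem_univ j, mul_pos hdj (Complex.normSq_pos.2 hj)⟩
    by_cases hi : 0 < d i
    · exact mul_nonneg hi.le (Complex.normSq_nonneg _)
    · simp [hx i hi]
  · rintro _ ⟨W, hW, rfl⟩
    by_contra! hlt
    set S : Submodule ℂ (m → ℂ) :=
      ⨅ i ∈ {i | ¬ ¬ 0 < d i}, LinearMap.ker (LinearMap.proj i : (m → ℂ) →ₗ[ℂ] ℂ)
    have hS : finrank ℂ S = #{i | ¬ 0 < d i} := finrank_iInf_ker_proj _
    have hcard := card_filter_add_card_filter_not (s := univ) (0 < d ·)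
    have : ¬ Disjoint W S := fun hdisj => by
      have := Submodule.finrank_add_finrank_le_of_disjoint hdisj
      simp only [finrank_fintype_fun_eq_card, card_univ] at this hcard
      omega
    obtain ⟨x, hxW, hxS, hx0⟩ : ∃ x ∈ W, x ∈ S ∧ x ≠ 0 := by
      simpa [Submodule.disjoint_def] using this
    simp only [S, Submodule.mem_iInf, Set.mem_ofPred_eq, LinearMap.mem_ker, LinearMap.proj_apply,
      not_not] at hxS
    refine (hW x hxW hx0).not_ge (sum_nonpos fun i _ => ?_)
    by_cases hi : 0 < d i
    · simp [hxS i hi]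
    · exact mul_nonpos_of_nonpos_of_nonneg (not_lt.1 hi) (Complex.normSq_nonneg _)

end Diagonal

lemma Function.Injective.sum_extend_zero {ι η R M : Type*} [Fintype ι] [Fintype η] [Zero R]
    [AddCommMonoid M] {s : ι → η} (hs : Injective s) (g : η → R → M) (hg : ∀ j, g j 0 = 0)
    (x : ι → R) : ∑ j, g j (extend s x 0 j) = ∑ i, g (s i) (x i) := by
  classical
  rw [← sum_subset (subset_univ (univ.map ⟨s, hs⟩)), sum_map]
  · simp [hs.extend_apply]
  · intro j _ hj
    have : ¬ ∃ i, s i = j := by simpa using hj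
    simp [extend_apply' _ _ _ this, hg]

namespace Matrix

variable {m m' : Type*} [Fintype m] [Fintype m']

lemma star_extend_dotProduct_mulVec_extend {s : m → m'} (hs : Injective s)
    (A : Matrix m' m' ℂ) (x : m → ℂ) :
    star (extend s x 0) ⬝ᵥ A *ᵥ extend s x 0 = star x ⬝ᵥ A.submatrix s s *ᵥ x := by
  simp only [dotProduct, mulVec, Pi.star_apply, submatrix_apply]
  have hrow (j : m') : ∑ k, A j k * extend s x 0 k = ∑ i, A j (s i) * x i :=
    hs.sum_extend_zero (fun k c => A j k * c) (fun _ => mul_zero _) x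
  simp_rw [hrow]
  exact hs.sum_extend_zero (fun j c => star c * ∑ i, A j (s i) * x i) (fun _ => by simp) x

variable [DecidableEq m] {A : Matrix m m ℂ}

lemma IsHermitian.re_star_dotProduct_mulVec (hA : A.IsHermitian) (x : m → ℂ) :
    (star x ⬝ᵥ A *ᵥ x).re = ∑ i, hA.eigenvalues i *
      Complex.normSq ((star (hA.eigenvectorUnitary : Matrix m m ℂ) *ᵥ x) i) := by
  set U := (hA.eigenvectorUnitary : Matrix m m ℂ)
  have hx : star x ᵥ* U = star (star U *ᵥ x) := by
    rw [star_mulVec, star_eq_conjTranspose, conjTranspose_conjTranspose]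
  conv_lhs => rw [hA.spectral_theorem, Unitary.conjStarAlgAut_apply]
  rw [← mulVec_mulVec, ← mulVec_mulVec, dotProduct_mulVec, hx]
  simp only [dotProduct, mulVec_diagonal, Pi.star_apply, Complex.re_sum]
  refine sum_congr rfl fun i _ => ?_
  rw [Complex.star_def, mul_left_comm, ← Complex.normSq_eq_conj_mul_self]
  simp

theorem IsHermitian.isGreatest_posDefDims (hA : A.IsHermitian) (s : ℝ) :
    IsGreatest (posDefDims ℂ fun x => s * (star x ⬝ᵥ A *ᵥ x).re)
      #{i | 0 < s * hA.eigenvalues i} := by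
  have hform : (fun x => s * (star x ⬝ᵥ A *ᵥ x).re) =
      (fun y => ∑ i, s * hA.eigenvalues i * Complex.normSq (y i)) ∘
        UnitaryGroup.toLinearEquiv (star hA.eigenvectorUnitary) := by
    ext x
    simp [hA.re_star_dotProduct_mulVec, mul_sum, mul_assoc, UnitaryGroup.toLinearEquiv]
  rw [hform, posDefDims_comp_linearEquiv]
  exact isGreatest_posDefDims_sum_mul_normSq _

variable [DecidableEq m']

theorem IsHermitian.card_pos_eigenvalues_submatrix_interlace {A : Matrix m' m' ℂ}
    (hA : A.IsHermitian) {s : m → m'} (hs : Injective s)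
    (hcard : Fintype.card m' ≤ Fintype.card m + 1) (r : ℝ) :
    #{i | 0 < r * (hA.submatrix s).eigenvalues i} ≤ #{i | 0 < r * hA.eigenvalues i} ∧
      #{i | 0 < r * hA.eigenvalues i} ≤ #{i | 0 < r * (hA.submatrix s).eigenvalues i} + 1 := by
  refine le_and_le_add_one_of_isGreatest_posDefDims (f := ExtendByZero.linearMap ℂ s)
    (extend_injective hs (0 : m' → ℂ)) (by simpa using hcard) ?_ (hA.isGreatest_posDefDims r)
  convert (hA.submatrix s).isGreatest_posDefDims r using 2
  ext x
  exact congrArg (fun z => r * z.re) (star_extend_dotProduct_mulVec_extend hs A x)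

end Matrix

lemma card_pos_add_card_neg_add_card_zero {m : Type*} [Fintype m] (e : m → ℝ) :
    #{i | 0 < e i} + #{i | e i < 0} + #{i | e i = 0} = Fintype.card m := by
  simp only [card_filter, ← sum_add_distrib, Fintype.card_eq_sum_ones]
  refine sum_congr rfl fun i _ => ?_
  rcases lt_trichotomy (e i) 0 with h | h | h
  · simp [h, h.not_gt, h.ne]
  · simp [h]
  · simp [h, h.not_gt, h.ne']

/-- Restricting a Hermitian form to a codimension-1 subspace changes
(signature, nullity) by exactly one in total: in matrix terms, if `H` is the
top-left `n×n` principal submatrix of the `(n+1)×(n+1)` Hermitian matrix `H'`,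
then `|sign H' - sign H| + |null H' - null H| = 1`. -/
theorem stmt12 (n : ℕ) (H' : Matrix (Fin (n + 1)) (Fin (n + 1)) ℂ)
    (hH' : H'.IsHermitian) :
    |hermSign H' - hermSign (H'.submatrix Fin.castSucc Fin.castSucc)| +
      |(hermNull H' : ℤ) - (hermNull (H'.submatrix Fin.castSucc Fin.castSucc) : ℤ)| = 1 := by
  have hH := hH'.submatrix Fin.castSucc
  have hcard : Fintype.card (Fin (n + 1)) ≤ Fintype.card (Fin n) + 1 := by simp
  obtain ⟨hpos₁, hpos₂⟩ := hH'.card_pos_eigenvalues_submatrix_interlace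
    (Fin.castSucc_injective n) hcard 1
  obtain ⟨hneg₁, hneg₂⟩ := hH'.card_pos_eigenvalues_submatrix_interlace
    (Fin.castSucc_injective n) hcard (-1)
  simp only [one_mul, neg_mul, Left.neg_pos_iff] at hpos₁ hpos₂ hneg₁ hneg₂
  have htot' := card_pos_add_card_neg_add_card_zero hH'.eigenvalues
  have htot := card_pos_add_card_neg_add_card_zero hH.eigenvalues
  simp only [hermSign, hermNull, dif_pos hH', dif_pos hH, abs_eq_max_neg, Fintype.card_fin]
    at htot htot' ⊢
  omega
end

section
/- Let H' be an (n+1)×(n+1) Hermitian complex matrix and H its top-left n×n principal submatrix. If det(H) ≠ 0 and det(H') ≠ 0, then sign(H') = sign(H) + ε where ε = ±1, and ε = sign of the real number det(H')/det(H). -/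
open scoped Classical

/-!
For a Hermitian matrix `M`, the number `c(M)` of negative eigenvalues is the largest dimension of
a subspace on which the form `x ↦ Re (x* M x)` is negative definite. Restricting the form to a
hyperplane loses at most one such dimension, so `c(H) ≤ c(H') ≤ c(H) + 1`. For a nonsingular `M`
the signature is `size − 2 c(M)` and `det M` has the sign of `(−1) ^ c(M)`; hence the signature
jumps by `+1` exactly when `c` does not change, i.e. when `det H' / det H > 0`.
-/

open Matrix Module Finset

lemma Finset.prod_eq_neg_one_pow_card_mul_prod_abs {ι R : Type*} [Fintype ι] [CommRing R]
    [LinearOrder R] [IsStrictOrderedRing R] (f : ι → R) :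
    ∏ i, f i = (-1) ^ #{i | f i < 0} * ∏ i, |f i| := by
  rw [← Finset.prod_const, Finset.prod_filter, ← Finset.prod_mul_distrib]
  refine Finset.prod_congr rfl fun i _ => ?_
  rcases lt_or_ge (f i) 0 with hi | hi
  · rw [if_pos hi, abs_of_neg hi, neg_one_mul, neg_neg]
  · rw [if_neg hi.not_gt, abs_of_nonneg hi, one_mul]

lemma Submodule.finrank_add_finrank_le_finrank_comap_add {K V V' : Type*} [DivisionRing K]
    [AddCommGroup V] [Module K V] [FiniteDimensional K V] [AddCommGroup V'] [Module K V']
    [FiniteDimensional K V'] (f : V →ₗ[K] V') (N : Submodule K V') :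
    finrank K N + finrank K V ≤ finrank K (N.comap f) + finrank K V' := by
  have hker : N.comap f = LinearMap.ker (N.mkQ ∘ₗ f) := by
    rw [LinearMap.ker_comp, Submodule.ker_mkQ]
  have hrange := LinearMap.finrank_range_add_finrank_ker (N.mkQ ∘ₗ f)
  have hquot := Submodule.finrank_quotient_add_finrank N
  have hle := Submodule.finrank_le (LinearMap.range (N.mkQ ∘ₗ f))
  rw [hker]
  omega

namespace Matrix

variable {𝕜 : Type*} [RCLike 𝕜] {ι ι' : Type*} [Fintype ι] [Fintype ι']

def IsNegDefOn (M : Matrix ι ι 𝕜) (W : Submodule 𝕜 (ι → 𝕜)) : Prop :=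
  ∀ x ∈ W, x ≠ 0 → RCLike.re (star x ⬝ᵥ (M *ᵥ x)) < 0

lemma star_dotProduct_conjTranspose_mul_mul_mulVec (M : Matrix ι' ι' 𝕜) (A : Matrix ι' ι 𝕜)
    (x : ι → 𝕜) : star x ⬝ᵥ ((Aᴴ * M * A) *ᵥ x) = star (A *ᵥ x) ⬝ᵥ (M *ᵥ (A *ᵥ x)) := by
  rw [← mulVec_mulVec, ← mulVec_mulVec, dotProduct_mulVec, star_mulVec]

lemma IsNegDefOn.map {M : Matrix ι' ι' 𝕜} {A : Matrix ι' ι 𝕜} {W : Submodule 𝕜 (ι → 𝕜)}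
    (hW : IsNegDefOn (Aᴴ * M * A) W) : IsNegDefOn M (W.map A.mulVecLin) := by
  rintro _ ⟨x, hx, rfl⟩ hx0
  have hx0' : x ≠ 0 := by rintro rfl; simp at hx0
  simpa [star_dotProduct_conjTranspose_mul_mul_mulVec] using hW x hx hx0'

lemma IsNegDefOn.comap {M : Matrix ι' ι' 𝕜} {A : Matrix ι' ι 𝕜} {W : Submodule 𝕜 (ι' → 𝕜)}
    (hW : IsNegDefOn M W) (hA : Function.Injective A.mulVec) :
    IsNegDefOn (Aᴴ * M * A) (W.comap A.mulVecLin) := fun x hx hx0 => by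
  rw [star_dotProduct_conjTranspose_mul_mul_mulVec]
  exact hW _ hx fun h => hx0 (hA (by simpa using h))

omit [Fintype ι'] in
lemma finrank_map_mulVecLin {A : Matrix ι' ι 𝕜} (hA : Function.Injective A.mulVec)
    (W : Submodule 𝕜 (ι → 𝕜)) : finrank 𝕜 (W.map A.mulVecLin) = finrank 𝕜 W :=
  (Submodule.equivMapOfInjective _ hA W).finrank_eq.symm

section Embedding

variable [DecidableEq ι']

omit [Fintype ι] in
lemma submatrix_eq_conjTranspose_mul_mul (M : Matrix ι' ι' 𝕜) (f : ι → ι') :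
    M.submatrix f f =
      ((1 : Matrix ι' ι' 𝕜).submatrix id f)ᴴ * M * (1 : Matrix ι' ι' 𝕜).submatrix id f := by
  ext i j
  simp [mul_apply, one_apply]

lemma injective_mulVec_one_submatrix [DecidableEq ι] {f : ι → ι'} (hf : Function.Injective f) :
    Function.Injective ((1 : Matrix ι' ι' 𝕜).submatrix id f).mulVec := by
  have hinv :
      ((1 : Matrix ι' ι' 𝕜).submatrix id f)ᴴ * (1 : Matrix ι' ι' 𝕜).submatrix id f = 1 := by
    rw [← submatrix_one f hf, submatrix_eq_conjTranspose_mul_mul, Matrix.mul_one]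
  refine Function.LeftInverse.injective (g := ((1 : Matrix ι' ι' 𝕜).submatrix id f)ᴴ.mulVec) ?_
  intro x
  rw [mulVec_mulVec, hinv, one_mulVec]

end Embedding

section Diagonal

variable [DecidableEq ι]

lemma re_star_dotProduct_diagonal_mulVec (w : ι → ℝ) (x : ι → 𝕜) :
    RCLike.re (star x ⬝ᵥ (diagonal (RCLike.ofReal ∘ w) *ᵥ x)) = ∑ i, w i * ‖x i‖ ^ 2 := by
  simp only [dotProduct, mulVec_diagonal, map_sum]
  refine Finset.sum_congr rfl fun i _ => ?_
  rw [Pi.star_apply, Function.comp_apply, mul_left_comm, RCLike.star_def, RCLike.conj_mul,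
    ← RCLike.ofReal_pow, ← RCLike.ofReal_mul, RCLike.ofReal_re]

lemma finrank_le_card_of_isNegDefOn_diagonal (w : ι → ℝ) {W : Submodule 𝕜 (ι → 𝕜)}
    (hW : IsNegDefOn (diagonal (RCLike.ofReal ∘ w)) W) : finrank 𝕜 W ≤ #{i | w i < 0} := by
  let π : (ι → 𝕜) →ₗ[𝕜] ({i // w i < 0} → 𝕜) := LinearMap.funLeft 𝕜 𝕜 Subtype.val
  have hπ : Function.Injective (π ∘ₗ W.subtype) := by
    refine (injective_iff_map_eq_zero _).2 fun ⟨x, hx⟩ hπx => ?_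
    by_contra hx0
    have hneg := hW x hx fun h => hx0 (Subtype.ext h)
    rw [re_star_dotProduct_diagonal_mulVec] at hneg
    refine hneg.not_ge (Finset.sum_nonneg fun i _ => ?_)
    rcases lt_or_ge (w i) 0 with hi | hi
    · have : x i = 0 := congrFun hπx ⟨i, hi⟩
      simp [this]
    · positivity
  simpa [Fintype.card_subtype] using LinearMap.finrank_le_finrank_of_injective hπ

lemma isNegDefOn_diagonal_top {w : ι → ℝ} (hw : ∀ i, w i < 0) :
    IsNegDefOn (diagonal (RCLike.ofReal ∘ w) : Matrix ι ι 𝕜) ⊤ := fun x _ hx0 => by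
  obtain ⟨i, hi⟩ := Function.ne_iff.1 hx0
  rw [re_star_dotProduct_diagonal_mulVec]
  refine Finset.sum_neg' (fun j _ => ?_) ⟨i, Finset.mem_univ _, ?_⟩
  · exact mul_nonpos_of_nonpos_of_nonneg (hw j).le (sq_nonneg _)
  · exact mul_neg_of_neg_of_pos (hw i) (pow_pos (norm_pos_iff.2 hi) 2)

lemma exists_isNegDefOn_diagonal (w : ι → ℝ) :
    ∃ W : Submodule 𝕜 (ι → 𝕜),
      IsNegDefOn (diagonal (RCLike.ofReal ∘ w)) W ∧ finrank 𝕜 W = #{i | w i < 0} := by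
  set e : {i // w i < 0} → ι := Subtype.val
  have he : Function.Injective e := Subtype.val_injective
  refine ⟨(⊤ : Submodule 𝕜 _).map ((1 : Matrix ι ι 𝕜).submatrix id e).mulVecLin,
    IsNegDefOn.map ?_, ?_⟩
  · rw [← submatrix_eq_conjTranspose_mul_mul, submatrix_diagonal _ _ he]
    exact isNegDefOn_diagonal_top fun i => i.2
  · rw [finrank_map_mulVecLin (injective_mulVec_one_submatrix he), finrank_top,
      finrank_fintype_fun_eq_card, Fintype.card_subtype]

end Diagonal

namespace IsHermitian

section Inertia

variable [DecidableEq ι] {M : Matrix ι ι 𝕜} (hM : M.IsHermitian)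

noncomputable def negIndex : ℕ := #{i | hM.eigenvalues i < 0}

lemma conjTranspose_eigenvectorUnitary_mul_mul :
    (hM.eigenvectorUnitary : Matrix ι ι 𝕜)ᴴ * M * (hM.eigenvectorUnitary : Matrix ι ι 𝕜) =
      diagonal (RCLike.ofReal ∘ hM.eigenvalues) := by
  rw [← hM.conjStarAlgAut_star_eigenvectorUnitary, Unitary.conjStarAlgAut_star_apply]
  rfl

lemma injective_mulVec_eigenvectorUnitary :
    Function.Injective (hM.eigenvectorUnitary : Matrix ι ι 𝕜).mulVec := by
  refine Function.LeftInverse.injective (g := (hM.eigenvectorUnitary : Matrix ι ι 𝕜)ᴴ.mulVec) ?_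
  intro x
  rw [mulVec_mulVec, ← star_eq_conjTranspose, Unitary.coe_star_mul_self, one_mulVec]

lemma finrank_le_negIndex {W : Submodule 𝕜 (ι → 𝕜)} (hW : IsNegDefOn M W) :
    finrank 𝕜 W ≤ hM.negIndex := by
  have hcomap := hW.comap hM.injective_mulVec_eigenvectorUnitary
  rw [hM.conjTranspose_eigenvectorUnitary_mul_mul] at hcomap
  have hdiag := finrank_le_card_of_isNegDefOn_diagonal _ hcomap
  have hrank := Submodule.finrank_add_finrank_le_finrank_comap_add
    (hM.eigenvectorUnitary : Matrix ι ι 𝕜).mulVecLin W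
  rw [negIndex]
  omega

lemma exists_isNegDefOn_finrank_eq_negIndex :
    ∃ W : Submodule 𝕜 (ι → 𝕜), IsNegDefOn M W ∧ finrank 𝕜 W = hM.negIndex := by
  obtain ⟨W, hW, hWrank⟩ := exists_isNegDefOn_diagonal (𝕜 := 𝕜) hM.eigenvalues
  rw [← hM.conjTranspose_eigenvectorUnitary_mul_mul] at hW
  exact ⟨_, hW.map, (finrank_map_mulVecLin hM.injective_mulVec_eigenvectorUnitary W).trans hWrank⟩

end Inertia

section Interlacing

variable [DecidableEq ι] [DecidableEq ι'] {M : Matrix ι' ι' 𝕜} (hM : M.IsHermitian)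
  {f : ι → ι'} (hf : Function.Injective f)
include hf

theorem negIndex_submatrix_le : (hM.submatrix f).negIndex ≤ hM.negIndex := by
  obtain ⟨W, hW, hWrank⟩ := (hM.submatrix f).exists_isNegDefOn_finrank_eq_negIndex
  rw [submatrix_eq_conjTranspose_mul_mul] at hW
  rw [← hWrank, ← finrank_map_mulVecLin (injective_mulVec_one_submatrix hf)]
  exact hM.finrank_le_negIndex hW.map

theorem negIndex_add_card_le :
    hM.negIndex + Fintype.card ι ≤ (hM.submatrix f).negIndex + Fintype.card ι' := by
  obtain ⟨N, hN, hNrank⟩ := hM.exists_isNegDefOn_finrank_eq_negIndex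
  have hcomap := hN.comap (injective_mulVec_one_submatrix (𝕜 := 𝕜) hf)
  rw [← submatrix_eq_conjTranspose_mul_mul] at hcomap
  have hW := (hM.submatrix f).finrank_le_negIndex hcomap
  have hrank := Submodule.finrank_add_finrank_le_finrank_comap_add
    ((1 : Matrix ι' ι' 𝕜).submatrix id f).mulVecLin N
  rw [finrank_fintype_fun_eq_card, finrank_fintype_fun_eq_card] at hrank
  omega

end Interlacing

section Determinant

variable [DecidableEq ι] {M : Matrix ι ι 𝕜} (hM : M.IsHermitian)

lemma det_eq_neg_one_pow_negIndex_mul :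
    M.det = (((-1) ^ hM.negIndex * ∏ i, |hM.eigenvalues i| : ℝ) : 𝕜) := by
  rw [hM.det_eq_prod_eigenvalues, ← RCLike.ofReal_prod,
    Finset.prod_eq_neg_one_pow_card_mul_prod_abs, negIndex]

lemma eigenvalues_ne_zero (hdet : M.det ≠ 0) (i : ι) : hM.eigenvalues i ≠ 0 := by
  rw [hM.det_eq_prod_eigenvalues, Finset.prod_ne_zero_iff] at hdet
  exact_mod_cast hdet i (Finset.mem_univ i)

lemma prod_abs_eigenvalues_pos (hdet : M.det ≠ 0) : 0 < ∏ i, |hM.eigenvalues i| :=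
  Finset.prod_pos fun i _ => abs_pos.2 (hM.eigenvalues_ne_zero hdet i)

end Determinant

end IsHermitian

end Matrix

lemma hermSign_eq_card_sub_two_mul_negIndex {ι : Type} [Fintype ι] [DecidableEq ι]
    {M : Matrix ι ι ℂ} (hM : M.IsHermitian) (hdet : M.det ≠ 0) :
    hermSign M = Fintype.card ι - 2 * hM.negIndex := by
  have hpos : #{i | 0 < hM.eigenvalues i} = #{i | ¬ hM.eigenvalues i < 0} := by
    congr 1
    refine Finset.filter_congr fun i _ => ?_
    rw [not_lt, (hM.eigenvalues_ne_zero hdet i).symm.le_iff_lt]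
  have hcard := Finset.card_filter_add_card_filter_not (s := Finset.univ)
    (fun i => hM.eigenvalues i < 0)
  rw [Finset.card_univ] at hcard
  rw [hermSign, dif_pos hM, Matrix.IsHermitian.negIndex, hpos]
  omega

/-- If `H` is the top-left principal submatrix of the Hermitian matrix `H'` and
both determinants are nonzero, the signature jumps by `ε = ±1`, the sign of the
real number `det H' / det H`. -/
theorem stmt13 (n : ℕ) (H' : Matrix (Fin (n + 1)) (Fin (n + 1)) ℂ)
    (hH' : H'.IsHermitian)
    (hdet : (H'.submatrix Fin.castSucc Fin.castSucc).det ≠ 0) (hdet' : H'.det ≠ 0) :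
    hermSign H' = hermSign (H'.submatrix Fin.castSucc Fin.castSucc) +
      (if 0 < (H'.det / (H'.submatrix Fin.castSucc Fin.castSucc).det).re then 1 else -1) := by
  have hH := hH'.submatrix Fin.castSucc
  obtain ⟨k, hk, hk_eq⟩ : ∃ k ≤ 1, hH'.negIndex = hH.negIndex + k := by
    have hle := hH'.negIndex_submatrix_le (Fin.castSucc_injective n)
    have hle' := hH'.negIndex_add_card_le (Fin.castSucc_injective n)
    rw [Fintype.card_fin, Fintype.card_fin] at hle'
    exact ⟨hH'.negIndex - hH.negIndex, by omega, by omega⟩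
  have hratio : (H'.det / (H'.submatrix Fin.castSucc Fin.castSucc).det).re =
      (-1) ^ k * ((∏ i, |hH'.eigenvalues i|) / ∏ i, |hH.eigenvalues i|) := by
    rw [hH'.det_eq_neg_one_pow_negIndex_mul, hH.det_eq_neg_one_pow_negIndex_mul,
      ← RCLike.ofReal_div, ← RCLike.re_to_complex, RCLike.ofReal_re, hk_eq, pow_add, mul_assoc,
      mul_div_mul_left _ _ (pow_ne_zero _ (by norm_num)), mul_div_assoc]
  rw [hermSign_eq_card_sub_two_mul_negIndex hH' hdet',
    hermSign_eq_card_sub_two_mul_negIndex hH hdet, hratio, hk_eq, Fintype.card_fin,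
    Fintype.card_fin]
  have hq := div_pos (hH'.prod_abs_eigenvalues_pos hdet') (hH.prod_abs_eigenvalues_pos hdet)
  interval_cases k
  · rw [pow_zero, one_mul, if_pos hq]
    push_cast
    ring
  · rw [pow_one, neg_one_mul, if_neg (by linarith)]
    push_cast
    ring
end
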